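/- arXiv:2304.11614 — 3 statements merged into one kernel-verified Lean document; each statement's English description precedes it below -/
import Mathlib

section
/- The integral from 0 to 1 of arctanh(x)·log(1−x²)/x dx equals −(7/8)·ζ(3). -/
open Real

/-- The real Riemann zeta value ζ(s) = ∑_{n≥1} 1/n^s. -/
noncomputable def zetaR (s : ℕ) : ℝ := ∑' n : ℕ, 1 / ((n : ℝ) + 1) ^ s

/-- Inverse hyperbolic tangent: arctanh x = (1/2) log((1+x)/(1−x)). -/
noncomputable def arctanh (x : ℝ) : ℝ := (1 / 2) * Real.log ((1 + x) / (1 - x))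

/-!
Expanding `arctanh x / x = ∑ x^(2m) / (2m+1)` and `-log (1 - x²) = ∑ x^(2k+2) / (k+1)` and
integrating termwise turns the integral into `-2U`, `U = ∑ K(2m+1, 2k+2)`, where
`K(x, y) = 1/(xy(x+y))` is `tornheim`.

The Tornheim sum `T = ∑_{a,b ≥ 1} K(a, b)` equals `2ζ(3)`: summing along rows gives `∑ H_a / a²`,
summing along antidiagonals `a + b = n` gives `2 ∑ H_(n-1) / n²`, and `H_a = H_(a-1) + 1/a`.
Now split `T` by the parities of `a` and `b`. By homogeneity the (even, even) part is `T/8`; the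
two mixed parts both equal `U`; and the (odd, odd) part is `2U`, because its antidiagonal sums are
twice the column sums of `U`. Hence `T = 4U + T/8`, i.e. `U = 7ζ(3)/16`.
-/

open Finset Filter Topology

noncomputable def tornheim (x y : ℝ) : ℝ := 1 / (x * y * (x + y))

noncomputable def harmonicAP (d r : ℝ) (n : ℕ) : ℝ := ∑ i ∈ range n, 1 / (d * i + r)

lemma tornheim_comm (x y : ℝ) : tornheim x y = tornheim y x := by
  simp only [tornheim, mul_comm x y, add_comm x y]

lemma tornheim_mul_mul (c x y : ℝ) : tornheim (c * x) (c * y) = tornheim x y / c ^ 3 := by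
  rw [tornheim, tornheim, ← mul_add,
    show c * x * (c * y) * (c * (x + y)) = x * y * (x + y) * c ^ 3 by ring, ← div_div]

lemma tornheim_eq_sub_div_sq {x y : ℝ} (hx : x ≠ 0) (hy : y ≠ 0) (hxy : x + y ≠ 0) :
    tornheim x y = (1 / x - 1 / (x + y)) / y ^ 2 := by
  unfold tornheim
  field_simp
  ring

lemma tornheim_eq_add_div_sq {x y : ℝ} (hx : x ≠ 0) (hy : y ≠ 0) :
    tornheim x y = (1 / x + 1 / y) / (x + y) ^ 2 := by
  rcases eq_or_ne (x + y) 0 with hxy | hxy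
  · simp [tornheim, hxy]
  unfold tornheim
  field_simp
  ring

lemma tornheim_le_one_div_mul_sqrt {x y : ℝ} (hx : 0 < x) (hy : 0 < y) :
    tornheim x y ≤ 1 / (x * √x) * (1 / (y * √y)) := by
  rw [tornheim, div_mul_div_comm, one_mul]
  refine one_div_le_one_div_of_le (by positivity) ?_
  calc x * √x * (y * √y) = x * y * √(x * y) := by
        rw [Real.sqrt_mul hx.le]; ring
    _ ≤ x * y * (x + y) := by
        gcongr
        rw [Real.sqrt_le_left (by positivity)]
        nlinarith [mul_pos hx hy]

lemma hasSum_sub_add_of_antitone {f : ℕ → ℝ} (hf : Antitone f) (hlim : Tendsto f atTop (𝓝 0))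
    (j : ℕ) : HasSum (fun i => f i - f (i + j)) (∑ i ∈ range j, f i) := by
  rw [hasSum_iff_tendsto_nat_of_nonneg fun i => sub_nonneg.2 (hf (Nat.le_add_right i j))]
  have partial_sum (n : ℕ) : ∑ i ∈ range n, (f i - f (i + j))
      = ∑ i ∈ range j, f i - ∑ i ∈ range j, f (n + i) := by
    have h := sum_range_add f n j
    rw [add_comm n j, sum_range_add] at h
    simp only [sum_sub_distrib, add_comm _ j]
    linarith
  simp only [partial_sum]
  have hrem : Tendsto (fun n => ∑ i ∈ range j, f (n + i)) atTop (𝓝 0) := by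
    simpa using tendsto_finsetSum (range j) fun i _ => hlim.comp (tendsto_add_atTop_nat i)
  simpa using tendsto_const_nhds.sub hrem

lemma hasSum_tornheim_arith {d r : ℝ} (hd : 0 < d) (hr : 0 < r) (j : ℕ) :
    HasSum (fun i : ℕ => tornheim (d * i + r) (d * j)) (harmonicAP d r j / (d * j) ^ 2) := by
  rcases Nat.eq_zero_or_pos j with rfl | hj
  · simp [tornheim, harmonicAP]
  have hanti : Antitone fun i : ℕ => 1 / (d * i + r) := fun m n hmn => by
    have : (m : ℝ) ≤ n := by exact_mod_cast hmn
    dsimp only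
    gcongr
  have hlim : Tendsto (fun i : ℕ => 1 / (d * i + r)) atTop (𝓝 0) :=
    tendsto_const_nhds.div_atTop <| tendsto_atTop_add_const_right _ _ <|
      (tendsto_natCast_atTop_atTop).const_mul_atTop hd
  have hj' : (0 : ℝ) < j := by exact_mod_cast hj
  refine ((hasSum_sub_add_of_antitone hanti hlim j).div_const ((d * j) ^ 2)).congr_fun fun i => ?_
  rw [tornheim_eq_sub_div_sq (by positivity) (by positivity) (by positivity)]
  push_cast
  ring_nf

lemma sum_antidiagonal_tornheim {d r : ℝ} (hd : 0 ≤ d) (hr : 0 < r) (n : ℕ) :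
    ∑ p ∈ antidiagonal n, tornheim (d * p.1 + r) (d * p.2 + r)
      = 2 * harmonicAP d r (n + 1) / (d * n + 2 * r) ^ 2 := by
  have hterm (p : ℕ × ℕ) (hp : p ∈ antidiagonal n) : tornheim (d * p.1 + r) (d * p.2 + r)
      = (1 / (d * p.1 + r) + 1 / (d * p.2 + r)) / (d * n + 2 * r) ^ 2 := by
    rw [tornheim_eq_add_div_sq (by positivity) (by positivity), ← (mem_antidiagonal.1 hp)]
    push_cast
    ring_nf
  have hswap : ∑ p ∈ antidiagonal n, 1 / (d * p.2 + r) = ∑ p ∈ antidiagonal n, 1 / (d * p.1 + r) :=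
    by simpa using Nat.sum_antidiagonal_swap (f := fun p : ℕ × ℕ => 1 / (d * p.1 + r))
  have hrange : ∑ p ∈ antidiagonal n, 1 / (d * p.1 + r) = harmonicAP d r (n + 1) := by
    rw [Nat.sum_antidiagonal_eq_sum_range_succ_mk]
    rfl
  rw [sum_congr rfl hterm, ← sum_div, sum_add_distrib, hswap, hrange]
  ring

section Reindexing

variable {M : Type*} [AddCommMonoid M] [TopologicalSpace M] [ContinuousAdd M]

lemma HasSum.sum_antidiagonal [RegularSpace M] {f : ℕ × ℕ → M} {a : M} (hf : HasSum f a) :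
    HasSum (fun n => ∑ p ∈ antidiagonal n, f p) a := by
  refine HasSum.sigma (γ := fun n => antidiagonal n)
    (HasAntidiagonal.sigmaAntidiagonalEquivProd.hasSum_iff.2 hf) fun n => ?_
  rw [← sum_finset_coe]
  exact hasSum_fintype _

lemma HasSum.even_add_odd_prod {f : ℕ × ℕ → M} {a b c d : M}
    (h00 : HasSum (fun p : ℕ × ℕ => f (2 * p.1, 2 * p.2)) a)
    (h01 : HasSum (fun p : ℕ × ℕ => f (2 * p.1, 2 * p.2 + 1)) b)
    (h10 : HasSum (fun p : ℕ × ℕ => f (2 * p.1 + 1, 2 * p.2)) c)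
    (h11 : HasSum (fun p : ℕ × ℕ => f (2 * p.1 + 1, 2 * p.2 + 1)) d) :
    HasSum f (a + b + (c + d)) := by
  let e : (ℕ × ℕ ⊕ ℕ × ℕ) ⊕ (ℕ × ℕ ⊕ ℕ × ℕ) ≃ ℕ × ℕ :=
    ((Equiv.sumCongr (Equiv.prodSumDistrib ℕ ℕ ℕ).symm (Equiv.prodSumDistrib ℕ ℕ ℕ).symm).trans
      (Equiv.sumProdDistrib ℕ ℕ (ℕ ⊕ ℕ)).symm).trans
      (Equiv.prodCongr Equiv.natSumNatEquivNat Equiv.natSumNatEquivNat)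
  refine e.hasSum_iff.1 (((h00.congr_fun ?_).sum (h01.congr_fun ?_)).sum
    ((h10.congr_fun ?_).sum (h11.congr_fun ?_))) <;>
  · intro p
    simp [e, Equiv.natSumNatEquivNat_apply]

end Reindexing

lemma summable_one_div_mul_sqrt_succ :
    Summable fun n : ℕ => 1 / (((n : ℝ) + 1) * √((n : ℝ) + 1)) := by
  have h := Real.summable_one_div_nat_rpow.2 (by norm_num : (1 : ℝ) < 3 / 2)
  refine ((summable_nat_add_iff 1).2 h).congr fun n => ?_
  rw [show (3 / 2 : ℝ) = 1 + 1 / 2 by norm_num, Real.rpow_add (by positivity), Real.rpow_one,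
    ← Real.sqrt_eq_rpow]
  push_cast
  rfl

lemma summable_tornheim_succ : Summable fun p : ℕ × ℕ => tornheim (p.1 + 1) (p.2 + 1) :=
  (summable_one_div_mul_sqrt_succ.mul_of_nonneg summable_one_div_mul_sqrt_succ
    (fun _ => by positivity) (fun _ => by positivity)).of_nonneg_of_le
    (fun _ => by unfold tornheim; positivity)
    fun _ => tornheim_le_one_div_mul_sqrt (by positivity) (by positivity)

lemma hasSum_tornheim_succ :
    HasSum (fun p : ℕ × ℕ => tornheim (p.1 + 1) (p.2 + 1)) (2 * zetaR 3) := by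
  set T := ∑' p : ℕ × ℕ, tornheim (p.1 + 1) (p.2 + 1)
  have hT : HasSum (fun p : ℕ × ℕ => tornheim (p.1 + 1) (p.2 + 1)) T :=
    summable_tornheim_succ.hasSum
  have hrows : HasSum (fun a : ℕ => harmonicAP 1 1 (a + 1) / ((a : ℝ) + 1) ^ 2) T := by
    refine hT.prod_fiberwise fun a => ?_
    simpa [tornheim_comm _ ((a : ℝ) + 1)] using hasSum_tornheim_arith one_pos one_pos (a + 1)
  have hdiag : HasSum (fun n : ℕ => harmonicAP 1 1 (n + 1) / ((n : ℝ) + 2) ^ 2) (T / 2) := by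
    refine (hT.sum_antidiagonal.div_const 2).congr_fun fun n => ?_
    have h := sum_antidiagonal_tornheim zero_le_one one_pos n
    simp only [one_mul, mul_one] at h
    rw [h]
    ring
  have hshift : HasSum (fun a : ℕ => harmonicAP 1 1 a / ((a : ℝ) + 1) ^ 2) (T / 2) := by
    refine (hasSum_nat_add_iff' 1).1 ?_
    simpa [harmonicAP, add_assoc, one_add_one_eq_two] using hdiag
  have hzeta : HasSum (fun n : ℕ => 1 / ((n : ℝ) + 1) ^ 3) (T / 2) := by
    refine (sub_half T ▸ hrows.sub hshift).congr_fun fun a => ?_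
    simp only [harmonicAP, sum_range_succ, one_mul]
    field_simp
    ring
  rw [zetaR, hzeta.tsum_eq, mul_div_cancel₀ _ two_ne_zero]
  exact hT

lemma summable_tornheim_parity (i j : ℕ) :
    Summable fun p : ℕ × ℕ => tornheim ((2 * p.1 + i : ℕ) + 1) ((2 * p.2 + j : ℕ) + 1) :=
  summable_tornheim_succ.comp_injective (i := fun p : ℕ × ℕ => (2 * p.1 + i, 2 * p.2 + j))
    fun p q h => by
      simp only [Prod.mk.injEq] at h
      ext <;> omega

lemma hasSum_tornheim_even_odd_fiberwise {U : ℝ}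
    (hU : HasSum (fun p : ℕ × ℕ => tornheim (2 * p.1 + 2) (2 * p.2 + 1)) U) :
    HasSum (fun a : ℕ => harmonicAP 2 1 (a + 1) / (2 * ((a : ℝ) + 1)) ^ 2) U := by
  refine hU.prod_fiberwise fun a => ?_
  have h := hasSum_tornheim_arith two_pos one_pos (a + 1)
  push_cast at h
  refine h.congr_fun fun b => ?_
  rw [tornheim_comm]
  ring_nf

lemma hasSum_tornheim_odd_odd {U : ℝ}
    (hU : HasSum (fun p : ℕ × ℕ => tornheim (2 * p.1 + 2) (2 * p.2 + 1)) U) :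
    HasSum (fun p : ℕ × ℕ => tornheim (2 * p.1 + 1) (2 * p.2 + 1)) (2 * U) := by
  have hs : Summable fun p : ℕ × ℕ => tornheim (2 * p.1 + 1) (2 * p.2 + 1) := by
    simpa using summable_tornheim_parity 0 0
  convert hs.hasSum using 1
  refine ((hasSum_tornheim_even_odd_fiberwise hU).mul_left 2).unique
    (hs.hasSum.sum_antidiagonal.congr_fun fun n => ?_)
  rw [sum_antidiagonal_tornheim zero_le_two one_pos]
  ring

lemma hasSum_tornheim_odd_even :
    HasSum (fun p : ℕ × ℕ => tornheim (2 * p.1 + 1) (2 * p.2 + 2)) (7 / 16 * zetaR 3) := by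
  set U := ∑' p : ℕ × ℕ, tornheim (2 * p.1 + 2) (2 * p.2 + 1)
  have h10 : HasSum (fun p : ℕ × ℕ => tornheim (2 * p.1 + 2) (2 * p.2 + 1)) U := by
    refine Summable.hasSum ?_
    convert summable_tornheim_parity 1 0 using 3 <;> push_cast <;> ring
  have h01 : HasSum (fun p : ℕ × ℕ => tornheim (2 * p.1 + 1) (2 * p.2 + 2)) U :=
    ((Equiv.prodComm ℕ ℕ).hasSum_iff.2 h10).congr_fun fun p => tornheim_comm _ _
  have hT := hasSum_tornheim_succ
  have h11 : HasSum (fun p : ℕ × ℕ => tornheim (2 * p.1 + 2) (2 * p.2 + 2)) (2 * zetaR 3 / 2 ^ 3) :=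
    (hT.div_const _).congr_fun fun p => by
      rw [← tornheim_mul_mul]
      ring_nf
  have hsplit : HasSum (fun p : ℕ × ℕ => tornheim (p.1 + 1) (p.2 + 1))
      (2 * U + U + (U + 2 * zetaR 3 / 2 ^ 3)) := by
    refine HasSum.even_add_odd_prod ((hasSum_tornheim_odd_odd h10).congr_fun ?_) (h01.congr_fun ?_)
      (h10.congr_fun ?_) (h11.congr_fun ?_) <;>
    · intro p
      push_cast
      ring_nf
  have hU : U = 7 / 16 * zetaR 3 := by linarith [hT.unique hsplit]
  exact hU ▸ h01

lemma hasSum_arctanh_div {x : ℝ} (hx0 : 0 < x) (hx1 : x < 1) :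
    HasSum (fun m : ℕ => x ^ (2 * m) / (2 * m + 1)) (arctanh x / x) := by
  have hx : x ≠ 0 := hx0.ne'
  have hval : arctanh x / x = (Real.log (1 + x) - Real.log (1 - x)) / (2 * x) := by
    rw [arctanh, Real.log_div (by linarith) (by linarith)]
    field_simp
  rw [hval]
  refine ((Real.hasSum_log_sub_log_of_abs_lt_one (abs_lt.2 ⟨by linarith, hx1⟩)).div_const
    (2 * x)).congr_fun fun m => ?_
  field_simp
  ring

lemma hasSum_neg_arctanh_mul_log_div {x : ℝ} (hx0 : 0 < x) (hx1 : x < 1) :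
    HasSum (fun p : ℕ × ℕ => x ^ (2 * p.1) / (2 * p.1 + 1) * ((x ^ 2) ^ (p.2 + 1) / (p.2 + 1)))
      (-(arctanh x * Real.log (1 - x ^ 2) / x)) := by
  have h1 := hasSum_arctanh_div hx0 hx1
  have h2 := Real.hasSum_pow_div_log_of_abs_lt_one (x := x ^ 2) (by
    rw [abs_of_pos (by positivity)]; nlinarith)
  rw [show -(arctanh x * Real.log (1 - x ^ 2) / x) = arctanh x / x * -Real.log (1 - x ^ 2) by ring]
  exact h1.mul h2 (h1.summable.mul_of_nonneg h2.summable (fun _ => by positivity)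
    (fun _ => by positivity))

lemma integral_pow_div_mul_pow_div (m k : ℕ) :
    ∫ x in (0 : ℝ)..1, x ^ (2 * m) / (2 * m + 1) * ((x ^ 2) ^ (k + 1) / (k + 1))
      = 2 * tornheim (2 * m + 1) (2 * k + 2) := by
  have h (x : ℝ) : x ^ (2 * m) / (2 * m + 1) * ((x ^ 2) ^ (k + 1) / (k + 1))
      = x ^ (2 * m + 2 * (k + 1)) / ((2 * m + 1) * (k + 1)) := by
    rw [← pow_mul, div_mul_div_comm, ← pow_add]
  simp only [h, intervalIntegral.integral_div, integral_pow, tornheim]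
  push_cast
  field_simp
  ring

open MeasureTheory Set in
lemma hasSum_two_mul_tornheim_odd_even :
    HasSum (fun p : ℕ × ℕ => 2 * tornheim (2 * p.1 + 1) (2 * p.2 + 2))
      (-∫ x in (0 : ℝ)..1, arctanh x * Real.log (1 - x ^ 2) / x) := by
  set g : ℕ × ℕ → ℝ → ℝ :=
    fun p x => x ^ (2 * p.1) / (2 * p.1 + 1) * ((x ^ 2) ^ (p.2 + 1) / (p.2 + 1))
  have hint (p : ℕ × ℕ) : ∫ x in Ioo 0 1, g p x = 2 * tornheim (2 * p.1 + 1) (2 * p.2 + 2) := by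
    rw [← integral_Ioc_eq_integral_Ioo, ← intervalIntegral.integral_of_le zero_le_one]
    exact integral_pow_div_mul_pow_div p.1 p.2
  have hnorm (p : ℕ × ℕ) : ∫ x in Ioo 0 1, ‖g p x‖ = ∫ x in Ioo 0 1, g p x :=
    setIntegral_congr_fun measurableSet_Ioo fun x hx => by
      have hx0 : 0 ≤ x := hx.1.le
      exact Real.norm_of_nonneg (by positivity)
  have hg := hasSum_integral_of_summable_integral_norm (μ := volume.restrict (Ioo (0 : ℝ) 1))
    (F := g)
    (fun p => (by fun_prop : Continuous (g p)).integrableOn_Icc.mono_set Ioo_subset_Icc_self)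
    (by simpa only [hnorm, hint] using hasSum_tornheim_odd_even.summable.mul_left 2)
  simp only [hint] at hg
  rw [intervalIntegral.integral_of_le zero_le_one, integral_Ioc_eq_integral_Ioo, ← integral_neg]
  have hsum : ∫ x in Ioo 0 1, ∑' p, g p x
      = ∫ x in Ioo 0 1, -(arctanh x * Real.log (1 - x ^ 2) / x) :=
    setIntegral_congr_fun measurableSet_Ioo fun x hx =>
      (hasSum_neg_arctanh_mul_log_div hx.1 hx.2).tsum_eq
  exact hsum ▸ hg

theorem stmt0 :
    ∫ x in (0:ℝ)..1, arctanh x * Real.log (1 - x ^ 2) / x = -(7 / 8) * zetaR 3 := by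
  have h := hasSum_two_mul_tornheim_odd_even.unique (hasSum_tornheim_odd_even.mul_left 2)
  linarith
end

section
/- The integral from 0 to 1 of log²(1+x)/x dx equals ζ(3)/4. -/
open Real MeasureTheory Set

lemma summable_one_div_nat_add_one_pow {p : ℕ} (hp : 1 < p) :
    Summable fun n : ℕ => 1 / ((n : ℝ) + 1) ^ p := by
  simpa using (summable_nat_add_iff 1).mpr (Real.summable_one_div_nat_pow.mpr hp)

lemma zetaR_pos {p : ℕ} (hp : 1 < p) : 0 < zetaR p :=
  (summable_one_div_nat_add_one_pow hp).tsum_pos (fun n => by positivity) 0 (by simp)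

lemma tsum_one_div_two_mul_add_one_pow {p : ℕ} (hp : 1 < p) :
    ∑' k : ℕ, 1 / (2 * (k : ℝ) + 1) ^ p = (1 - 1 / 2 ^ p) * zetaR p := by
  set u : ℕ → ℝ := fun n => 1 / ((n : ℝ) + 1) ^ p
  have hs : Summable u := summable_one_div_nat_add_one_pow hp
  have hsplit := tsum_even_add_odd (hs.comp_injective (mul_right_injective₀ two_ne_zero))
    (hs.comp_injective fun a b h => by omega)
  have heven : ∀ k : ℕ, u (2 * k) = 1 / (2 * (k : ℝ) + 1) ^ p := fun k => by simp [u]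
  have hodd : ∀ k : ℕ, u (2 * k + 1) = 1 / 2 ^ p * u k := fun k => by
    simp only [u]
    push_cast
    rw [show 2 * (k : ℝ) + 1 + 1 = 2 * (k + 1) by ring, mul_pow, one_div_mul_one_div]
  simp only [heven, hodd, tsum_mul_left] at hsplit
  rw [zetaR]
  linear_combination hsplit

lemma setIntegral_eq_of_bijOn {s t : Set ℝ} {φ φ' f g : ℝ → ℝ} (hs : MeasurableSet s)
    (hφ : BijOn φ s t) (hφ' : ∀ x ∈ s, HasDerivWithinAt φ (φ' x) s x)
    (hfg : ∀ x ∈ s, f x = |φ' x| * g (φ x)) :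
    ∫ x in s, f x = ∫ y in t, g y := by
  rw [← hφ.image_eq, integral_image_eq_integral_abs_deriv_smul hs hφ' hφ.injOn]
  exact setIntegral_congr_fun hs hfg

lemma hasSum_integral_of_nonneg {α : Type*} [MeasurableSpace α] {μ : Measure α}
    {F : ℕ → α → ℝ} (hF : ∀ n, Integrable (F n) μ) (hF_nonneg : ∀ n, 0 ≤ᵐ[μ] F n)
    (hsum : Summable fun n => ∫ a, F n a ∂μ) :
    HasSum (fun n => ∫ a, F n a ∂μ) (∫ a, ∑' n, F n a ∂μ) :=
  hasSum_integral_of_summable_integral_norm hF <| hsum.congr fun n =>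
    integral_congr_ae <| (hF_nonneg n).mono fun _ h => (Real.norm_of_nonneg h).symm

lemma integral_pow_mul_exp_neg_mul_Ioi (m : ℕ) {r : ℝ} (hr : 0 < r) :
    ∫ y in Ioi 0, y ^ m * exp (-(r * y)) = m.factorial / r ^ (m + 1) := by
  have := integral_rpow_mul_exp_neg_mul_Ioi (a := m + 1) (by positivity) hr
  rw [add_sub_cancel_right, Gamma_nat_eq_factorial, ← Nat.cast_succ] at this
  simp_rw [rpow_natCast] at this
  rw [this, one_div_pow, one_div_mul_eq_div]

lemma bijOn_exp_neg_Ioi_Ioo : BijOn (fun y => exp (-y)) (Ioi 0) (Ioo 0 1) := by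
  refine InvOn.bijOn (f' := fun t => -log t) ⟨fun y _ => by simp, fun t ht => ?_⟩
    (fun y hy => ⟨exp_pos _, exp_lt_one_iff.mpr (neg_neg_of_pos hy)⟩)
    (fun t ht => neg_pos.mpr (log_neg ht.1 ht.2))
  simp [exp_log ht.1]

lemma integral_pow_mul_log_pow (k m : ℕ) :
    ∫ t in Ioo (0:ℝ) 1, t ^ k * log t ^ m = (-1) ^ m * m.factorial / ((k : ℝ) + 1) ^ (m + 1) := by
  rw [← setIntegral_eq_of_bijOn (f := fun y => (-1) ^ m * (y ^ m * exp (-((k + 1) * y))))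
    measurableSet_Ioi bijOn_exp_neg_Ioi_Ioo
    (fun y _ => ((hasDerivAt_neg y).exp).hasDerivWithinAt) (fun y _ => ?_),
    integral_const_mul, integral_pow_mul_exp_neg_mul_Ioi m (by positivity), mul_div_assoc]
  rw [mul_neg_one, abs_neg, abs_of_pos (exp_pos _), log_exp, neg_pow y, ← exp_nat_mul,
    show -((k + 1) * y) = -y + k * -y by ring, exp_add]
  ring

lemma hasSum_integral_log_sq_div_one_sub_pow {m : ℕ} (hm : 0 < m) :
    HasSum (fun n : ℕ => 2 / ((m * n : ℝ) + 1) ^ 3)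
      (∫ t in Ioo (0:ℝ) 1, log t ^ 2 / (1 - t ^ m)) := by
  have hgeom : ∀ t ∈ Ioo (0:ℝ) 1,
      HasSum (fun n => t ^ (m * n) * log t ^ 2) (log t ^ 2 / (1 - t ^ m)) := fun t ht => by
    simpa only [pow_mul, div_eq_inv_mul] using (hasSum_geometric_of_lt_one
      (pow_nonneg ht.1.le m) (pow_lt_one₀ ht.1.le ht.2 hm.ne')).mul_right (log t ^ 2)
  have hint : (fun n : ℕ => ∫ t in Ioo (0:ℝ) 1, t ^ (m * n) * log t ^ 2) =
      fun n : ℕ => 2 / ((m * n : ℝ) + 1) ^ 3 :=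
    funext fun n => by rw [integral_pow_mul_log_pow]; push_cast; ring
  have hsum : Summable fun n : ℕ => 2 / ((m * n : ℝ) + 1) ^ 3 := by
    refine ((summable_one_div_nat_add_one_pow (p := 3) (by norm_num)).mul_left 2).of_nonneg_of_le
      (fun n => by positivity) fun n => ?_
    rw [← mul_one_div]
    gcongr
    nlinarith [(Nat.one_le_cast (α := ℝ)).mpr hm, (n.cast_nonneg : (0:ℝ) ≤ n)]
  rw [setIntegral_congr_fun measurableSet_Ioo fun t ht => (hgeom t ht).tsum_eq.symm, ← hint]
  refine hasSum_integral_of_nonneg (fun n => ?_) (fun n => ?_) (hint ▸ hsum)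
  · exact .of_integral_ne_zero (by rw [congrFun hint n]; positivity)
  · exact ae_restrict_of_forall_mem measurableSet_Ioo fun t ht =>
      mul_nonneg (pow_nonneg ht.1.le _) (sq_nonneg _)

lemma integral_log_sq_div_one_sub :
    ∫ t in Ioo (0:ℝ) 1, log t ^ 2 / (1 - t) = 2 * zetaR 3 := by
  have := hasSum_integral_log_sq_div_one_sub_pow one_pos
  simp only [Nat.cast_one, pow_one, one_mul] at this
  rw [← this.tsum_eq, zetaR, ← tsum_mul_left]
  simp only [mul_one_div]

lemma integral_log_sq_div_one_sub_sq :
    ∫ t in Ioo (0:ℝ) 1, log t ^ 2 / (1 - t ^ 2) = 7 / 4 * zetaR 3 := by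
  rw [← (hasSum_integral_log_sq_div_one_sub_pow two_pos).tsum_eq]
  simp_rw [Nat.cast_ofNat, ← mul_one_div (2 : ℝ)]
  rw [tsum_mul_left, tsum_one_div_two_mul_add_one_pow (by norm_num)]
  ring

lemma bijOn_one_sub_Ioo : BijOn (fun x : ℝ => 1 - x) (Ioo 0 1) (Ioo 0 1) :=
  InvOn.bijOn (f' := fun x => 1 - x) ⟨fun x _ => sub_sub_cancel 1 x, fun x _ => sub_sub_cancel 1 x⟩
    (fun x hx => ⟨by linarith [hx.2], by linarith [hx.1]⟩)
    (fun x hx => ⟨by linarith [hx.2], by linarith [hx.1]⟩)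

lemma bijOn_sq_Ioo : BijOn (fun x : ℝ => x ^ 2) (Ioo 0 1) (Ioo 0 1) :=
  InvOn.bijOn (f' := sqrt) ⟨fun x hx => sqrt_sq hx.1.le, fun x hx => sq_sqrt hx.1.le⟩
    (fun x hx => ⟨pow_pos hx.1 2, pow_lt_one₀ hx.1.le hx.2 two_ne_zero⟩)
    (fun x hx => ⟨sqrt_pos.mpr hx.1, (sqrt_lt' one_pos).mpr (by simpa using hx.2)⟩)

lemma bijOn_one_sub_div_one_add_Ioo :
    BijOn (fun x : ℝ => (1 - x) / (1 + x)) (Ioo 0 1) (Ioo 0 1) := by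
  have hmaps : MapsTo (fun x : ℝ => (1 - x) / (1 + x)) (Ioo 0 1) (Ioo 0 1) := fun x hx =>
    ⟨div_pos (by linarith [hx.2]) (by linarith [hx.1]),
      (div_lt_one (by linarith [hx.1])).mpr (by linarith [hx.1])⟩
  have hinv : LeftInvOn (fun x : ℝ => (1 - x) / (1 + x)) (fun x => (1 - x) / (1 + x)) (Ioo 0 1) :=
    fun x hx => by
      have : 1 + x ≠ 0 := by linarith [hx.1]
      field_simp
      ring
  exact InvOn.bijOn ⟨hinv, hinv⟩ hmaps hmaps

lemma integral_log_one_sub_sq_div :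
    ∫ x in Ioo (0:ℝ) 1, log (1 - x) ^ 2 / x = 2 * zetaR 3 := by
  rw [setIntegral_eq_of_bijOn measurableSet_Ioo bijOn_one_sub_Ioo
    (fun x _ => (hasDerivAt_id x).const_sub 1 |>.hasDerivWithinAt) (fun x _ => ?_),
    integral_log_sq_div_one_sub]
  simp

lemma integral_log_one_sub_sq_sq_div :
    ∫ x in Ioo (0:ℝ) 1, log (1 - x ^ 2) ^ 2 / x = zetaR 3 := by
  rw [setIntegral_eq_of_bijOn (φ' := fun x => 2 * x) (g := fun u => log (1 - u) ^ 2 / u / 2)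
    measurableSet_Ioo bijOn_sq_Ioo
    (fun x _ => by simpa using (hasDerivAt_pow 2 x).hasDerivWithinAt) (fun x hx => ?_),
    integral_div, integral_log_one_sub_sq_div]
  · ring
  · rw [abs_of_pos (by norm_num [hx.1])]
    field_simp

lemma integral_log_one_sub_div_one_add_sq_div :
    ∫ x in Ioo (0:ℝ) 1, log ((1 - x) / (1 + x)) ^ 2 / x = 7 / 2 * zetaR 3 := by
  rw [setIntegral_eq_of_bijOn (φ' := fun x => -2 / (1 + x) ^ 2)
    (g := fun t => 2 * (log t ^ 2 / (1 - t ^ 2))) measurableSet_Ioo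
    bijOn_one_sub_div_one_add_Ioo (fun x hx => ?_) (fun x hx => ?_),
    integral_const_mul, integral_log_sq_div_one_sub_sq]
  · ring
  · have : 1 + x ≠ 0 := by linarith [hx.1]
    have := ((hasDerivAt_id x).const_sub 1).div ((hasDerivAt_id x).const_add 1) this
    exact this.hasDerivWithinAt.congr_deriv (by simp only [id_eq]; ring)
  · have h1x : 1 + x ≠ 0 := by linarith [hx.1]
    have hsq : 1 - ((1 - x) / (1 + x)) ^ 2 = 4 * x / (1 + x) ^ 2 := by
      field_simp
      ring
    rw [hsq, abs_div, abs_neg, abs_two, abs_of_pos (by positivity : 0 < (1 + x) ^ 2)]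
    field_simp
    ring

lemma log_one_add_sq_eq {x : ℝ} (h0 : -1 < x) (h1 : x < 1) :
    log (1 + x) ^ 2 =
      (log (1 - x ^ 2) ^ 2 + log ((1 - x) / (1 + x)) ^ 2) / 2 - log (1 - x) ^ 2 := by
  have hm : 1 - x ≠ 0 := by linarith
  have hp : 1 + x ≠ 0 := by linarith
  rw [show 1 - x ^ 2 = (1 - x) * (1 + x) by ring, log_mul hm hp, log_div hm hp]
  ring

theorem stmt1 :
    ∫ x in (0:ℝ)..1, Real.log (1 + x) ^ 2 / x = zetaR 3 / 4 := by
  have hζ : 0 < zetaR 3 := zetaR_pos (by norm_num)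
  have hA := integral_log_one_sub_sq_div
  have hC := integral_log_one_sub_sq_sq_div
  have hD := integral_log_one_sub_div_one_add_sq_div
  have hsplit : ∀ x ∈ Ioo (0:ℝ) 1, log (1 + x) ^ 2 / x =
      (log (1 - x ^ 2) ^ 2 / x + log ((1 - x) / (1 + x)) ^ 2 / x) / 2 - log (1 - x) ^ 2 / x :=
    fun x hx => by rw [log_one_add_sq_eq (by linarith [hx.1]) hx.2]; ring
  -- a non-integrable function would have integral `0`
  have hAi : IntegrableOn (fun x => log (1 - x) ^ 2 / x) (Ioo 0 1) :=
    .of_integral_ne_zero (by rw [hA]; positivity)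
  have hCi : IntegrableOn (fun x => log (1 - x ^ 2) ^ 2 / x) (Ioo 0 1) :=
    .of_integral_ne_zero (by rw [hC]; positivity)
  have hDi : IntegrableOn (fun x => log ((1 - x) / (1 + x)) ^ 2 / x) (Ioo 0 1) :=
    .of_integral_ne_zero (by rw [hD]; positivity)
  rw [intervalIntegral.integral_of_le zero_le_one, integral_Ioc_eq_integral_Ioo,
    setIntegral_congr_fun measurableSet_Ioo hsplit, integral_sub _ hAi,
    integral_div, integral_add hCi hDi, hA, hC, hD]
  · ring
  · exact (hCi.add hDi).div_const 2
end

section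
/- For real x > 0, the series ∑_{n=1}^∞ (H_n − log(n+x−1) − γ + x/n − 3/(2n)) converges and equals γ·x + log Γ(x) + (1 − γ − log(2π))/2. -/
/-!
Write the `n`-th term as `r n + w n` with `r n = H_n - log n - γ - 1/(2n)` and
`w n = (x - 1)/n - log (1 + (x - 1)/n)`. The `w n` are the terms of Weierstrass' product for `Γ`:
their partial sums are, up to terms tending to `(x - 1) γ`, the Bohr–Mollerup sequence converging
to `log Γ(x)`. For the `r n`, Stirling's formula turns the `N`-th partial sum into
`(N + 1/2)(H_N - log N - γ) + γ/2 - log √2 - log (N! / (√(2N) (N/e)^N))`, which tends to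
`1/2 + γ/2 - log √(2π)` as soon as `N r N → 0`. That, and the summability of `r`, follow from
`|r n| ≤ 1/(4n²)`, obtained by telescoping: the step `r n - r (n + 1)` is expressed through the
step of `log` of the Stirling sequence, for which Robbins' bound is available.
-/

open Real Filter Finset Topology Stirling
open scoped Nat

/-- n-th harmonic number H_n = ∑_{k=1}^n 1/k. -/
noncomputable def harm (n : ℕ) : ℝ := ∑ k ∈ Finset.range n, 1 / ((k : ℝ) + 1)

local notation "γ" => Real.eulerMascheroniConstant

theorem norm_le_of_norm_sub_succ_le {E : Type*} [SeminormedAddCommGroup E] {u : ℕ → E}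
    {v : ℕ → ℝ} (hu : Tendsto u atTop (𝓝 0)) (hv : Tendsto v atTop (𝓝 0))
    (h : ∀ n, ‖u n - u (n + 1)‖ ≤ v n - v (n + 1)) (n : ℕ) : ‖u n‖ ≤ v n := by
  have hsteps (k : ℕ) : ‖u n - u (k + n)‖ ≤ v n - v (k + n) := by
    induction k with
    | zero => simp
    | succ k ih =>
      rw [add_right_comm]
      calc ‖u n - u (k + n + 1)‖ ≤ ‖u n - u (k + n)‖ + ‖u (k + n) - u (k + n + 1)‖ :=
            norm_sub_le_norm_sub_add_norm_sub _ _ _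
        _ ≤ v n - v (k + n + 1) := by linarith [h (k + n)]
  have hshift := tendsto_add_atTop_nat n
  simpa using le_of_tendsto_of_tendsto' ((tendsto_const_nhds.sub (hu.comp hshift)).norm)
    (tendsto_const_nhds.sub (hv.comp hshift)) hsteps

theorem summable_one_div_nat_add_one_sq : Summable fun n : ℕ => 1 / ((n : ℝ) + 1) ^ 2 := by
  simpa using (summable_nat_add_iff 1).2 (Real.summable_one_div_nat_pow.2 one_lt_two)

theorem harm_succ (n : ℕ) : harm (n + 1) = harm n + 1 / ((n : ℝ) + 1) :=
  sum_range_succ _ _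

theorem tendsto_harm_sub_log : Tendsto (fun n : ℕ => harm n - log n) atTop (𝓝 γ) := by
  convert Real.tendsto_harmonic_sub_log using 3 with n
  simp [harm, harmonic, one_div]

theorem log_factorial_succ (n : ℕ) : log (n + 1)! = log n ! + log ((n : ℝ) + 1) := by
  rw [Nat.factorial_succ, Nat.cast_mul, log_mul (by positivity) (by positivity), add_comm]
  push_cast
  ring

theorem log_factorial_succ_eq_log_stirlingSeq (n : ℕ) :
    log (n + 1)! = log (stirlingSeq (n + 1)) + log 2 / 2 + (n + 3 / 2) * log ((n : ℝ) + 1)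
      - (n + 1) := by
  rw [log_stirlingSeq_formula, log_mul two_ne_zero (by positivity),
    log_div (by positivity) (exp_pos 1).ne', log_exp]
  push_cast
  ring

theorem log_stirlingSeq_sub_succ (n : ℕ) :
    log (stirlingSeq (n + 1)) - log (stirlingSeq (n + 2)) =
      (n + 3 / 2) * (log ((n : ℝ) + 2) - log (n + 1)) - 1 := by
  have h := log_factorial_succ_eq_log_stirlingSeq (n + 1)
  rw [log_factorial_succ, log_factorial_succ_eq_log_stirlingSeq] at h
  push_cast at h
  rw [show (n : ℝ) + 1 + 1 = n + 2 by ring] at h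
  linarith

/-- The remainder in `H_m = log m + γ + 1 / (2 m) + O(1 / m²)`, at `m = n + 1`. -/
noncomputable def harmRemainder (n : ℕ) : ℝ :=
  harm (n + 1) - log ((n : ℝ) + 1) - γ - 1 / (2 * ((n : ℝ) + 1))

theorem tendsto_harmRemainder : Tendsto harmRemainder atTop (𝓝 0) := by
  have h₁ := (tendsto_add_atTop_iff_nat 1).2 tendsto_harm_sub_log
  have h₂ := tendsto_one_div_add_atTop_nhds_zero_nat.div_const (2 : ℝ)
  convert (h₁.sub_const γ).sub h₂ using 2 with n
  · rw [harmRemainder, Nat.cast_succ, div_div, mul_comm]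
  · simp

theorem abs_harmRemainder_sub_succ_le (n : ℕ) :
    |harmRemainder n - harmRemainder (n + 1)|
      ≤ (1 / ((n : ℝ) + 1) ^ 2 - 1 / ((n : ℝ) + 2) ^ 2) / 4 := by
  set a : ℝ := n + 1
  have ha0 : 0 < a := by positivity
  set σ := log (stirlingSeq (n + 1)) - log (stirlingSeq (n + 2)) with hσ
  have hσ0 : 0 ≤ σ := sub_nonneg.2 (log_stirlingSeq'_antitone n.le_succ)
  have hσ1 : σ ≤ 1 / (12 * a * (a + 1)) := by
    have h := log_stirlingSeq_sdiff_le (n + 1)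
    push_cast at h
    exact h
  set d := harmRemainder n - harmRemainder (n + 1)
  -- Robbins' bound `hσ1` on the steps of `log ∘ stirlingSeq` makes `d` nonpositive.
  have hd : (a + 1 / 2) * d = σ - 1 / (4 * a * (a + 1)) := by
    rw [hσ, log_stirlingSeq_sub_succ]
    simp only [d, harmRemainder, harm_succ]
    push_cast
    rw [show (n : ℝ) + 1 + 1 = n + 2 by ring]
    field_simp
    ring
  have hc : 1 / (12 * a * (a + 1)) ≤ 1 / (4 * a * (a + 1)) := by gcongr; norm_num
  have hd' : d = (σ - 1 / (4 * a * (a + 1))) / (a + 1 / 2) := by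
    rw [← hd]
    field_simp
  have hd0 : d ≤ 0 := by
    rw [hd']
    exact div_nonpos_of_nonpos_of_nonneg (by linarith) (by positivity)
  rw [show (n : ℝ) + 2 = a + 1 by ring]
  calc |d| = (1 / (4 * a * (a + 1)) - σ) / (a + 1 / 2) := by rw [abs_of_nonpos hd0, hd']; ring
    _ ≤ 1 / (4 * a * (a + 1)) / (a + 1 / 2) := by gcongr; linarith
    _ ≤ (1 / a ^ 2 - 1 / (a + 1) ^ 2) / 4 := by
      rw [div_div, div_sub_div _ _ (by positivity) (by positivity), div_div,
        div_le_div_iff₀ (by positivity) (by positivity)]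
      nlinarith [sq_nonneg a]

theorem abs_harmRemainder_le (n : ℕ) : |harmRemainder n| ≤ 1 / (4 * ((n : ℝ) + 1) ^ 2) := by
  have hv : Tendsto (fun n : ℕ => 1 / (4 * ((n : ℝ) + 1) ^ 2)) atTop (𝓝 0) := by
    simpa [div_eq_mul_inv] using
      (tendsto_one_div_add_atTop_nhds_zero_nat.pow 2).div_const (4 : ℝ)
  refine norm_le_of_norm_sub_succ_le tendsto_harmRemainder hv (fun k => ?_) n
  rw [Real.norm_eq_abs]
  convert abs_harmRemainder_sub_succ_le k using 1
  push_cast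
  field_simp
  ring

theorem summable_harmRemainder : Summable harmRemainder :=
  .of_norm_bounded (summable_one_div_nat_add_one_sq.div_const 4) fun n => by
    simpa [div_eq_mul_inv] using abs_harmRemainder_le n

theorem tendsto_mul_harmRemainder (c : ℝ) :
    Tendsto (fun n : ℕ => ((n : ℝ) + c) * harmRemainder n) atTop (𝓝 0) := by
  have h₁ : Tendsto (fun n : ℕ => ((n : ℝ) + 1) * harmRemainder n) atTop (𝓝 0) := by
    refine squeeze_zero_norm (fun n => ?_)
      (by simpa using tendsto_one_div_add_atTop_nhds_zero_nat.div_const (4 : ℝ))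
    have hn : (0 : ℝ) < n + 1 := by positivity
    calc ‖((n : ℝ) + 1) * harmRemainder n‖ ≤ (n + 1) * (1 / (4 * ((n : ℝ) + 1) ^ 2)) := by
          rw [norm_mul, Real.norm_of_nonneg hn.le, Real.norm_eq_abs]
          gcongr
          exact abs_harmRemainder_le n
      _ = ((n : ℝ) + 1)⁻¹ / 4 := by field_simp
  simpa [← add_mul] using h₁.add (tendsto_harmRemainder.const_mul (c - 1))

theorem sum_range_harmRemainder (N : ℕ) :
    ∑ n ∈ range N, harmRemainder n = (N + 1 / 2) * harm N - N - log N ! - N * γ := by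
  induction N with
  | zero => simp [harm]
  | succ N ih =>
    rw [sum_range_succ, ih, harmRemainder, harm_succ, log_factorial_succ]
    push_cast
    field_simp
    ring

theorem hasSum_harmRemainder : HasSum harmRemainder ((1 + γ - log (2 * π)) / 2) := by
  have hsum (N : ℕ) : ∑ n ∈ range (N + 1), harmRemainder n =
      (N + 3 / 2) * harmRemainder N + (1 / 2 + 1 / (4 * (N + 1))) + γ / 2
        - log (stirlingSeq (N + 1)) - log 2 / 2 := by
    rw [sum_range_harmRemainder, log_factorial_succ_eq_log_stirlingSeq, harmRemainder]
    push_cast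
    field_simp
    ring
  have hstirling : Tendsto (fun N : ℕ => log (stirlingSeq (N + 1))) atTop (𝓝 (log π / 2)) := by
    rw [← log_sqrt pi_pos.le]
    exact ((tendsto_add_atTop_iff_nat 1).2 tendsto_stirlingSeq_sqrt_pi).log
      (by positivity)
  have hsmall : Tendsto (fun N : ℕ => 1 / 2 + 1 / (4 * ((N : ℝ) + 1))) atTop (𝓝 (1 / 2)) := by
    simpa [div_eq_mul_inv] using
      (tendsto_one_div_add_atTop_nhds_zero_nat.div_const (4 : ℝ)).const_add (1 / 2 : ℝ)
  refine summable_harmRemainder.hasSum_iff_tendsto_nat.2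
    ((tendsto_add_atTop_iff_nat 1).1 ?_)
  simp_rw [hsum]
  convert ((((tendsto_mul_harmRemainder _).add hsmall).add_const (γ / 2)).sub hstirling).sub_const
      (log 2 / 2) using 2
  rw [log_mul two_ne_zero pi_ne_zero]
  ring

noncomputable def logGammaTerm (x : ℝ) (n : ℕ) : ℝ :=
  (x - 1) / (n + 1) - (log (x + n) - log (n + 1))

section logGammaTerm

variable {x : ℝ}

theorem logGammaTerm_eq_sub_log_div (hx : 0 < x) (n : ℕ) :
    logGammaTerm x n = (x - 1) / (n + 1) - log ((x + n) / (n + 1)) := by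
  rw [logGammaTerm, log_div (by positivity) (by positivity)]

theorem logGammaTerm_nonneg (hx : 0 < x) (n : ℕ) : 0 ≤ logGammaTerm x n := by
  have h := log_le_sub_one_of_pos (show 0 < (x + n) / (n + 1) by positivity)
  rw [logGammaTerm_eq_sub_log_div hx]
  have : (x + n) / (n + 1) - 1 = (x - 1) / (n + 1) := by field_simp; ring
  linarith

theorem logGammaTerm_le (hx : 0 < x) (n : ℕ) :
    logGammaTerm x n ≤ (x - 1) ^ 2 / ((n + 1) * (x + n)) := by
  have h := one_sub_inv_le_log_of_pos (show 0 < (x + n) / (n + 1) by positivity)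
  rw [logGammaTerm_eq_sub_log_div hx]
  have : (x - 1) / (n + 1) - (1 - ((x + n) / (n + 1))⁻¹)
      = (x - 1) ^ 2 / ((n + 1) * (x + n)) := by
    field_simp
    ring
  linarith

theorem summable_logGammaTerm (hx : 0 < x) : Summable (logGammaTerm x) := by
  refine .of_nonneg_of_le (logGammaTerm_nonneg hx) (fun n => (logGammaTerm_le hx n).trans ?_)
    (summable_one_div_nat_add_one_sq.mul_left ((x - 1) ^ 2 * (1 + x⁻¹)))
  rw [mul_one_div, mul_div_assoc, div_eq_mul_one_div _ ((n + 1 : ℝ) * (x + n))]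
  refine mul_le_mul_of_nonneg_left ?_ (sq_nonneg _)
  rw [div_le_div_iff₀ (by positivity) (by positivity)]
  field_simp
  nlinarith

theorem sum_range_logGammaTerm (N : ℕ) :
    ∑ n ∈ range N, logGammaTerm x n
      = (x - 1) * harm N - ∑ n ∈ range N, log (x + n) + log N ! := by
  induction N with
  | zero => simp [harm]
  | succ N ih =>
    rw [sum_range_succ, ih, sum_range_succ, logGammaTerm, harm_succ, log_factorial_succ]
    ring

theorem hasSum_logGammaTerm (hx : 0 < x) :
    HasSum (logGammaTerm x) (log (Gamma x) + γ * (x - 1)) := by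
  have hsum (N : ℕ) : ∑ n ∈ range (N + 1), logGammaTerm x n
      = (x - 1) * (harm (N + 1) - log (N + 1)) + x * (log (N + 1) - log N)
        + BohrMollerup.logGammaSeq x N := by
    rw [sum_range_logGammaTerm, BohrMollerup.logGammaSeq, log_factorial_succ]
    ring
  refine (summable_logGammaTerm hx).hasSum_iff_tendsto_nat.2
    ((tendsto_add_atTop_iff_nat 1).1 ?_)
  simp_rw [hsum]
  have hharm := (tendsto_add_atTop_iff_nat 1).2 tendsto_harm_sub_log
  push_cast at hharm
  convert ((hharm.const_mul (x - 1)).add (tendsto_log_nat_add_one_sub_log.const_mul x)).add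
    (BohrMollerup.tendsto_log_gamma hx) using 2
  ring

end logGammaTerm

theorem stmt16 (x : ℝ) (hx : 0 < x) :
    HasSum (fun n : ℕ =>
        harm (n + 1) - Real.log (((n : ℝ) + 1) + x - 1) - Real.eulerMascheroniConstant
          + x / ((n : ℝ) + 1) - 3 / (2 * ((n : ℝ) + 1)))
      (Real.eulerMascheroniConstant * x + Real.log (Real.Gamma x)
        + (1 - Real.eulerMascheroniConstant - Real.log (2 * Real.pi)) / 2) := by
  have hsplit (n : ℕ) : harm (n + 1) - log (((n : ℝ) + 1) + x - 1) - γ + x / ((n : ℝ) + 1)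
      - 3 / (2 * ((n : ℝ) + 1)) = harmRemainder n + logGammaTerm x n := by
    rw [harmRemainder, logGammaTerm, show ((n : ℝ) + 1) + x - 1 = x + n by ring]
    field_simp
    ring
  simp_rw [hsplit]
  convert hasSum_harmRemainder.add (hasSum_logGammaTerm hx) using 1
  ring
end
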